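/- arXiv:0902.0807 — 2 statements merged into one kernel-verified Lean document; each statement's English description precedes it below -/
import Mathlib

section
/- Let d ≥ 6 and let I ⊆ ℝ be an interval. There exists a constant C = C(d) such that for every measurable v : I × ℝ^d → ℂ, with Ω := {(t,x) ∈ I × ℝ^d : |v(t,x)| > W(x)/4}, one has ‖ |∇W| · |v|^{p_c−1} ‖_{L^2_t L^{2d/(d+2)}_x(Ω)} ≤ C ‖v‖_{L^{q₀}_t L^{r₀}_x(I×ℝ^d)}^{(2d+3)/(2(d−2))}, where q₀ = (2d+3)/(d−2) and r₀ = 2d(2d+3)/((d−2)(2d−1)). -/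
open MeasureTheory
open scoped ENNReal

noncomputable section

/-- ℝ^d as Euclidean space -/
abbrev Euc (d : ℕ) := EuclideanSpace ℝ (Fin d)

/-- The ground state W(x) = (1 + |x|²/(d(d−2)))^{−(d−2)/2}. -/
def Wgs (d : ℕ) (x : Euc d) : ℝ :=
  (1 + ‖x‖ ^ 2 / ((d : ℝ) * ((d : ℝ) - 2))) ^ (-(((d : ℝ) - 2) / 2))

/-- p_c = (d+2)/(d-2) -/
def pc (d : ℕ) : ℝ := ((d : ℝ) + 2) / ((d : ℝ) - 2)

/-- Mixed norm ‖F‖_{L^q_t L^r_x(Ω)} = (∫_I (∫_{ℝ^d} |F(t,x)|^r 1_Ω(t,x) dx)^{q/r} dt)^{1/q}. -/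
def mixNorm (d : ℕ) (q r : ℝ) (I : Set ℝ) (Ω : Set (ℝ × Euc d))
    (F : ℝ × Euc d → ℝ) : ℝ≥0∞ :=
  (∫⁻ t in I,
      (∫⁻ x, Ω.indicator (fun p => ENNReal.ofReal (|F p| ^ r)) (t, x)) ^ (q / r)) ^ (1 / q)

/-- time exponent q₀ = (2d+3)/(d−2) -/
def q0 (d : ℕ) : ℝ := (2 * (d : ℝ) + 3) / ((d : ℝ) - 2)

/-- space exponent r₀ = 2d(2d+3)/((d−2)(2d−1)) -/
def r0 (d : ℕ) : ℝ := 2 * (d : ℝ) * (2 * (d : ℝ) + 3) / (((d : ℝ) - 2) * (2 * (d : ℝ) - 1))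

/-! On `Ω` one has `W < 4|v|`, so part of the decay `|∇W| ≲ W ^ ((d-1)/(d-2))` can be traded for
a power of `|v|`: there `|∇W| |v| ^ (p_c-1) ≲ (1 + |x|²) ^ (-3/4) |v| ^ β` with
`β = (2d+3)/(2(d-2))`. Hölder in `x` with the exponents `2(d+2)/5` and `2(d+2)/(2d-1)` puts the
weight in `L ^ (4d/5)`, where it is integrable because `6d/5 > d`, and leaves `|v| ^ β` in
`L ^ (r₀/β)`; in time, `2β = q₀`. -/

section JapaneseBracket

variable {E : Type*} [NormedAddCommGroup E] {K : ℝ}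

theorem hasFDerivAt_one_add_norm_sq_div_rpow [InnerProductSpace ℝ E] (hK : 0 ≤ K) (c : ℝ)
    (x : E) :
    HasFDerivAt (fun y : E => (1 + ‖y‖ ^ 2 / K) ^ c)
      ((c * (1 + ‖x‖ ^ 2 / K) ^ (c - 1) * (2 / K)) • innerSL ℝ x) x := by
  have hbase : HasFDerivAt (fun y : E => 1 + ‖y‖ ^ 2 / K) ((2 / K) • innerSL ℝ x) x := by
    have := ((hasStrictFDerivAt_norm_sq x).hasFDerivAt.const_mul K⁻¹).const_add 1
    rw [← Nat.cast_smul_eq_nsmul ℝ, smul_smul, Nat.cast_ofNat, inv_mul_eq_div] at this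
    simpa only [inv_mul_eq_div] using this
  have hpos : 0 < 1 + ‖x‖ ^ 2 / K := by positivity
  have := (Real.hasDerivAt_rpow_const (p := c) (Or.inl hpos.ne')).comp_hasFDerivAt x hbase
  rw [smul_smul] at this
  exact this

theorem norm_le_sqrt_mul_sqrt_one_add_norm_sq_div (hK : 0 < K) (x : E) :
    ‖x‖ ≤ √K * √(1 + ‖x‖ ^ 2 / K) := by
  rw [← Real.sqrt_mul hK.le, mul_add, mul_one, mul_div_cancel₀ _ hK.ne']
  exact Real.le_sqrt_of_sq_le (by linarith)

theorem norm_fderiv_one_add_norm_sq_div_rpow_le [InnerProductSpace ℝ E] (hK : 0 < K) (c : ℝ)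
    (x : E) :
    ‖fderiv ℝ (fun y : E => (1 + ‖y‖ ^ 2 / K) ^ c) x‖ ≤
      2 * |c| / √K * (1 + ‖x‖ ^ 2 / K) ^ (c - 1 / 2) := by
  set g := 1 + ‖x‖ ^ 2 / K
  have hg : 0 < g := by positivity
  rw [(hasFDerivAt_one_add_norm_sq_div_rpow hK.le c x).fderiv, norm_smul, innerSL_apply_norm,
    Real.norm_eq_abs, abs_mul, abs_mul, abs_of_pos (Real.rpow_pos_of_pos hg _),
    abs_of_pos (div_pos two_pos hK)]
  have hsplit : g ^ (c - 1 / 2) = g ^ (c - 1) * √g := by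
    rw [Real.sqrt_eq_rpow, ← Real.rpow_add hg]; ring_nf
  calc |c| * g ^ (c - 1) * (2 / K) * ‖x‖
      ≤ |c| * g ^ (c - 1) * (2 / K) * (√K * √g) := by
        gcongr; exact norm_le_sqrt_mul_sqrt_one_add_norm_sq_div hK x
    _ = 2 * |c| / √K * g ^ (c - 1 / 2) := by
        rw [hsplit]
        field_simp
        rw [Real.sq_sqrt hK.le]

theorem integrable_one_add_norm_sq_div_rpow_neg [InnerProductSpace ℝ E] [FiniteDimensional ℝ E]
    [MeasurableSpace E] [BorelSpace E] (μ : Measure E) [μ.IsAddHaarMeasure] (hK : 0 < K) {s : ℝ}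
    (hs : (Module.finrank ℝ E : ℝ) < 2 * s) :
    Integrable (fun x : E => (1 + ‖x‖ ^ 2 / K) ^ (-s)) μ := by
  have hsK : (√K)⁻¹ ≠ 0 := inv_ne_zero (Real.sqrt_pos.mpr hK).ne'
  convert (integrable_rpow_neg_one_add_norm_sq (μ := μ) hs).comp_smul hsK using 2 with x
  rw [norm_smul, mul_pow, norm_inv, Real.norm_eq_abs, abs_of_nonneg (Real.sqrt_nonneg K),
    inv_pow, Real.sq_sqrt hK.le, inv_mul_eq_div]
  ring_nf

end JapaneseBracket

section MixedNorm

variable {d : ℕ} {s r β p q : ℝ} {Ω : Set (ℝ × Euc d)} {F G : ℝ × Euc d → ℝ}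
  {w : Euc d → ℝ}

theorem lintegral_indicator_rpow_le_of_le_mul_rpow (hr : 0 < r)
    (hpq : p.HolderConjugate q) (hw : Measurable w) (hw0 : ∀ x, 0 ≤ w x) (hG : Measurable G)
    (hFG : ∀ z ∈ Ω, |F z| ≤ w z.2 * |G z| ^ β) (t : ℝ) :
    ∫⁻ x, Ω.indicator (fun z => ENNReal.ofReal (|F z| ^ r)) (t, x) ≤
      (∫⁻ x, ENNReal.ofReal (w x ^ (r * p))) ^ (1 / p) *
        (∫⁻ x, ENNReal.ofReal (|G (t, x)| ^ (r * β * q))) ^ (1 / q) := by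
  have hpointwise : ∀ x, Ω.indicator (fun z => ENNReal.ofReal (|F z| ^ r)) (t, x) ≤
      ENNReal.ofReal (w x ^ r) * ENNReal.ofReal (|G (t, x)| ^ (β * r)) := by
    intro x
    by_cases hz : (t, x) ∈ Ω
    · rw [Set.indicator_of_mem hz, ← ENNReal.ofReal_mul (Real.rpow_nonneg (hw0 x) _),
        Real.rpow_mul (abs_nonneg _), ← Real.mul_rpow (hw0 x) (by positivity)]
      exact ENNReal.ofReal_le_ofReal (Real.rpow_le_rpow (abs_nonneg _) (hFG _ hz) hr.le)
    · rw [Set.indicator_of_notMem hz]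
      exact zero_le
  calc ∫⁻ x, Ω.indicator (fun z => ENNReal.ofReal (|F z| ^ r)) (t, x)
      ≤ ∫⁻ x, ENNReal.ofReal (w x ^ r) * ENNReal.ofReal (|G (t, x)| ^ (β * r)) :=
        lintegral_mono hpointwise
    _ ≤ (∫⁻ x, ENNReal.ofReal (w x ^ r) ^ p) ^ (1 / p) *
          (∫⁻ x, ENNReal.ofReal (|G (t, x)| ^ (β * r)) ^ q) ^ (1 / q) :=
        ENNReal.lintegral_mul_le_Lp_mul_Lq _ hpq (by fun_prop) (by fun_prop)
    _ = _ := by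
        simp_rw [ENNReal.ofReal_rpow_of_nonneg (Real.rpow_nonneg (hw0 _) _) hpq.nonneg,
          ENNReal.ofReal_rpow_of_nonneg (Real.rpow_nonneg (abs_nonneg _) _) hpq.symm.nonneg,
          ← Real.rpow_mul (hw0 _), ← Real.rpow_mul (abs_nonneg _)]
        ring_nf

theorem mixNorm_le_of_le_mul_rpow (hs : 0 < s) (hr : 0 < r) (hβ : 0 < β)
    (hpq : p.HolderConjugate q) (hw : Measurable w) (hw0 : ∀ x, 0 ≤ w x) (hG : Measurable G)
    (hwint : Integrable fun x => w x ^ (r * p)) (hFG : ∀ z ∈ Ω, |F z| ≤ w z.2 * |G z| ^ β)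
    (I : Set ℝ) :
    mixNorm d s r I Ω F ≤ (∫⁻ x, ENNReal.ofReal (w x ^ (r * p))) ^ (1 / (r * p)) *
      mixNorm d (s * β) (r * β * q) I Set.univ G ^ β := by
  set A := ∫⁻ x, ENNReal.ofReal (w x ^ (r * p))
  have hA : A ≠ ∞ := hwint.lintegral_lt_top.ne
  set B := fun t => ∫⁻ x, ENNReal.ofReal (|G (t, x)| ^ (r * β * q))
  have hp := hpq.pos
  have hq := hpq.symm.pos
  simp only [mixNorm, Set.indicator_univ]
  calc (∫⁻ t in I,
          (∫⁻ x, Ω.indicator (fun z => ENNReal.ofReal (|F z| ^ r)) (t, x)) ^ (s / r)) ^ (1 / s)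
      ≤ (∫⁻ t in I, (A ^ (1 / p) * B t ^ (1 / q)) ^ (s / r)) ^ (1 / s) := by
        gcongr with t
        exact lintegral_indicator_rpow_le_of_le_mul_rpow hr hpq hw hw0 hG hFG t
    _ = (A ^ (s / (r * p)) * ∫⁻ t in I, B t ^ (s / (r * q))) ^ (1 / s) := by
        rw [← lintegral_const_mul' _ _ (ENNReal.rpow_ne_top_of_nonneg (by positivity) hA)]
        congr 1
        refine lintegral_congr fun t => ?_
        rw [ENNReal.mul_rpow_of_nonneg _ _ (by positivity), ← ENNReal.rpow_mul,
          ← ENNReal.rpow_mul]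
        ring_nf
    _ = A ^ (1 / (r * p)) *
          ((∫⁻ t in I, B t ^ (s * β / (r * β * q))) ^ (1 / (s * β))) ^ β := by
        have hexp : s * β / (r * β * q) = s / (r * q) := by field_simp
        rw [hexp, ENNReal.mul_rpow_of_nonneg _ _ (by positivity), ← ENNReal.rpow_mul,
          ← ENNReal.rpow_mul]
        congr 2 <;> field_simp

end MixedNorm

def wgsBase (d : ℕ) (x : Euc d) : ℝ := 1 + ‖x‖ ^ 2 / ((d : ℝ) * ((d : ℝ) - 2))

section GroundState

variable {d : ℕ}

theorem Wgs_eq_wgsBase_rpow (x : Euc d) : Wgs d x = wgsBase d x ^ (-(((d : ℝ) - 2) / 2)) := rfl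

theorem continuous_wgsBase : Continuous (wgsBase d) := by
  unfold wgsBase
  fun_prop

theorem wgsBase_pos (hd : 2 < d) (x : Euc d) : 0 < wgsBase d x := by
  have : (2 : ℝ) < d := by exact_mod_cast hd
  have : 0 ≤ (d : ℝ) * ((d : ℝ) - 2) := by nlinarith
  unfold wgsBase
  positivity

theorem norm_fderiv_Wgs_le (hd : 2 < d) (x : Euc d) :
    ‖fderiv ℝ (Wgs d) x‖ ≤
      ((d : ℝ) - 2) / √((d : ℝ) * ((d : ℝ) - 2)) *
        wgsBase d x ^ (-(((d : ℝ) - 1) / 2)) := by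
  have hd' : (2 : ℝ) < d := by exact_mod_cast hd
  have hbound := norm_fderiv_one_add_norm_sq_div_rpow_le (E := Euc d)
    (by nlinarith : (0 : ℝ) < d * (d - 2)) (-(((d : ℝ) - 2) / 2)) x
  rw [abs_neg, abs_of_pos (by linarith)] at hbound
  refine hbound.trans_eq ?_
  congr 1
  · ring
  · rw [wgsBase]; ring_nf

theorem exists_norm_fderiv_Wgs_mul_rpow_le (hd : 3 ≤ d) :
    ∃ C ≥ 0, ∀ (x : Euc d) (V : ℝ), Wgs d x / 4 < V →
      ‖fderiv ℝ (Wgs d) x‖ * V ^ (pc d - 1) ≤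
        C * wgsBase d x ^ (-(3 / 4 : ℝ)) * V ^ ((2 * (d : ℝ) + 3) / (2 * ((d : ℝ) - 2))) := by
  have hd' : (3 : ℝ) ≤ d := by exact_mod_cast hd
  set a : ℝ := (2 * (d : ℝ) - 5) / (2 * ((d : ℝ) - 2)) with ha_def
  have ha : 0 ≤ a := div_nonneg (by linarith) (by linarith)
  have hd2 : (d : ℝ) - 2 ≠ 0 := by linarith
  have hC : 0 ≤ ((d : ℝ) - 2) / √((d : ℝ) * ((d : ℝ) - 2)) :=
    div_nonneg (by linarith) (Real.sqrt_nonneg _)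
  refine ⟨((d : ℝ) - 2) / √((d : ℝ) * ((d : ℝ) - 2)) * 4 ^ a, by positivity,
    fun x V hV => ?_⟩
  have hg := wgsBase_pos (by omega) x
  have hW : 0 < Wgs d x := Real.rpow_pos_of_pos hg _
  have hV0 : 0 < V := by linarith
  have hsplit :
      wgsBase d x ^ (-(((d : ℝ) - 1) / 2)) = wgsBase d x ^ (-(3 / 4 : ℝ)) * Wgs d x ^ a := by
    rw [Wgs_eq_wgsBase_rpow, ← Real.rpow_mul hg.le, ← Real.rpow_add hg, ha_def]
    congr 1
    field_simp
    ring
  have hWa : Wgs d x ^ a ≤ 4 ^ a * V ^ a := by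
    rw [← Real.mul_rpow (by norm_num) hV0.le]
    exact Real.rpow_le_rpow hW.le (by linarith) ha
  have hexp : V ^ a * V ^ (pc d - 1) = V ^ ((2 * (d : ℝ) + 3) / (2 * ((d : ℝ) - 2))) := by
    rw [← Real.rpow_add hV0, pc, ha_def]
    congr 1
    field_simp
    ring
  calc ‖fderiv ℝ (Wgs d) x‖ * V ^ (pc d - 1)
      ≤ ((d : ℝ) - 2) / √((d : ℝ) * ((d : ℝ) - 2)) *
          (wgsBase d x ^ (-(3 / 4 : ℝ)) * Wgs d x ^ a) * V ^ (pc d - 1) := by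
        rw [← hsplit]
        gcongr
        exact norm_fderiv_Wgs_le (by omega) x
    _ ≤ ((d : ℝ) - 2) / √((d : ℝ) * ((d : ℝ) - 2)) *
          (wgsBase d x ^ (-(3 / 4 : ℝ)) * (4 ^ a * V ^ a)) * V ^ (pc d - 1) := by
        gcongr
    _ = _ := by rw [← hexp]; ring

theorem integrable_const_mul_wgsBase_rpow_rpow (hd : 2 < d) {C : ℝ} (hC : 0 ≤ C) {b s : ℝ}
    (hbs : (d : ℝ) < 2 * (b * s)) :
    Integrable fun x : Euc d => (C * wgsBase d x ^ (-b)) ^ s := by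
  have hd' : (2 : ℝ) < d := by exact_mod_cast hd
  have hint := integrable_one_add_norm_sq_div_rpow_neg (E := Euc d) volume
    (by nlinarith : (0 : ℝ) < d * (d - 2)) (s := b * s) (by rwa [finrank_euclideanSpace_fin])
  refine (hint.const_mul (C ^ s)).congr (Filter.Eventually.of_forall fun x => ?_)
  have hg := wgsBase_pos hd x
  simp only
  rw [Real.mul_rpow hC (Real.rpow_nonneg hg.le _), ← Real.rpow_mul hg.le, neg_mul]
  rfl

end GroundState

theorem holderConjugate_two_mul_add_two_div {d : ℝ} (hd : 1 ≤ d) :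
    (2 * (d + 2) / 5).HolderConjugate (2 * (d + 2) / (2 * d - 1)) := by
  have : 2 * d - 1 ≠ 0 := by linarith
  rw [Real.holderConjugate_iff]
  refine ⟨by linarith, ?_⟩
  field_simp
  ring

theorem gradW_v_large_regime_general (d : ℕ) (hd : 6 ≤ d) (I : Set ℝ) :
    ∃ C : ℝ, 0 < C ∧ ∀ v : ℝ × Euc d → ℂ, Measurable v →
      mixNorm d 2 (2 * (d : ℝ) / ((d : ℝ) + 2)) I
          {p : ℝ × Euc d | p.1 ∈ I ∧ Wgs d p.2 / 4 < ‖v p‖}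
          (fun p => ‖fderiv ℝ (Wgs d) p.2‖ * ‖v p‖ ^ (pc d - 1)) ≤
        ENNReal.ofReal C *
          (mixNorm d (q0 d) (r0 d) I Set.univ (fun p => ‖v p‖)) ^
            ((2 * (d : ℝ) + 3) / (2 * ((d : ℝ) - 2))) := by
  have hd' : (6 : ℝ) ≤ d := by exact_mod_cast hd
  obtain ⟨C₀, hC₀, hgrad⟩ := exists_norm_fderiv_Wgs_mul_rpow_le (d := d) (by omega)
  set r : ℝ := 2 * (d : ℝ) / ((d : ℝ) + 2)
  set β : ℝ := (2 * (d : ℝ) + 3) / (2 * ((d : ℝ) - 2))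
  set p : ℝ := 2 * ((d : ℝ) + 2) / 5
  set q : ℝ := 2 * ((d : ℝ) + 2) / (2 * (d : ℝ) - 1)
  set w : Euc d → ℝ := fun x => C₀ * wgsBase d x ^ (-(3 / 4 : ℝ))
  have hwint : Integrable fun x => w x ^ (r * p) :=
    integrable_const_mul_wgsBase_rpow_rpow (by omega) hC₀
      (by simp only [r, p]; field_simp; linarith)
  set A := (∫⁻ x, ENNReal.ofReal (w x ^ (r * p))) ^ (1 / (r * p))
  have hA : A ≠ ∞ := ENNReal.rpow_ne_top_of_nonneg (by positivity) hwint.lintegral_lt_top.ne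
  refine ⟨A.toReal + 1, by positivity, fun v hv => ?_⟩
  have hq0 : q0 d = 2 * β := by simp only [q0, β]; field_simp
  have hr0 : r0 d = r * β * q := by simp only [r0, r, β, q]; field_simp
  rw [hq0, hr0]
  calc _ ≤ A * mixNorm d (2 * β) (r * β * q) I Set.univ (fun z => ‖v z‖) ^ β := by
        refine mixNorm_le_of_le_mul_rpow two_pos (by positivity)
          (div_pos (by linarith) (by linarith)) (holderConjugate_two_mul_add_two_div (by linarith))
          ((continuous_wgsBase.measurable.pow_const _).const_mul C₀)
          (fun x => mul_nonneg hC₀ (Real.rpow_nonneg (wgsBase_pos (by omega) x).le _))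
          hv.norm hwint (fun z hz => ?_) I
        rw [abs_of_nonneg (by positivity), abs_norm]
        exact hgrad z.2 _ hz.2
    _ ≤ _ := by
        gcongr
        exact ENNReal.le_ofReal_iff_toReal_le hA (by positivity) |>.mpr (by linarith)

/-- on Ω = {|v| > W/4},
‖|∇W||v|^{p_c−1}‖_{L²_t L^{2d/(d+2)}_x(Ω)} ≤ C ‖v‖_{L^{q₀}_t L^{r₀}_x}^{(2d+3)/(2(d−2))}. -/
theorem gradW_v_large_regime (d : ℕ) (hd : 6 ≤ d) (I : Set ℝ) (hI : I.OrdConnected) :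
    ∃ C : ℝ, 0 < C ∧ ∀ v : ℝ × Euc d → ℂ, Measurable v →
      mixNorm d 2 (2 * (d : ℝ) / ((d : ℝ) + 2)) I
          {p : ℝ × Euc d | p.1 ∈ I ∧ Wgs d p.2 / 4 < ‖v p‖}
          (fun p => ‖fderiv ℝ (Wgs d) p.2‖ * ‖v p‖ ^ (pc d - 1)) ≤
        ENNReal.ofReal C *
          (mixNorm d (q0 d) (r0 d) I Set.univ (fun p => ‖v p‖)) ^
            ((2 * (d : ℝ) + 3) / (2 * ((d : ℝ) - 2))) :=
  gradW_v_large_regime_general d hd I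
end
end

section
/- Let d ≥ 6 and let I ⊆ ℝ be an interval. There exists a constant C = C(d) such that for every measurable v : I × ℝ^d → ℂ, with Ω' := {(t,x) ∈ I × ℝ^d : |v(t,x)| ≤ W(x)/4}, one has ‖ W^{p_c−3} |∇W| · |v|² ‖_{L^2_t L^{2d/(d+2)}_x(Ω')} ≤ C ‖v‖_{L^{q₀}_t L^{r₀}_x(I×ℝ^d)}^{(2d+3)/(2(d−2))}, where q₀ = (2d+3)/(d−2) and r₀ = 2d(2d+3)/((d−2)(2d−1)). -/
open MeasureTheory
open scoped ENNReal

noncomputable section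

/-!
On the set `|v| ≤ W/4` one may trade `|v|^(2-α)` for `(W/4)^(2-α)`, where
`α = (2d+3)/(2(d-2)) ≤ 2`; since `|∇W(x)| = |x|/d · (1 + |x|²/(d(d-2)))^(-d/2)`, the integrand is
then at most `K |x| (1 + |x|²/(d(d-2)))^(-5/4) |v|^α`. This weight decays like `|x|^(-3/2)`, hence
lies in `L^(4d/5)(ℝ^d)`, and `(d+2)/(2d) = 5/(4d) + α/r₀`; Hölder's inequality in `x` followed by
`2α = q₀` in `t` gives the bound.
-/

lemma lintegral_le_mul_rpow_of_le_mul_rpow {X : Type*} [MeasurableSpace X] {μ : Measure X}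
    {r a ρ α : ℝ} (hr : 0 < r) (ha : 0 < a) (hρ : 0 < ρ) (hα : 0 < α)
    (hexp : 1 / r = 1 / a + α / ρ) {f : X → ℝ≥0∞} {G u : X → ℝ}
    (hG : Measurable G) (hu : Measurable u) (hG0 : ∀ x, 0 ≤ G x)
    (hf : ∀ x, f x ≤ ENNReal.ofReal ((G x * |u x| ^ α) ^ r)) :
    ∫⁻ x, f x ∂μ ≤
      ((∫⁻ x, ENNReal.ofReal (G x ^ a) ∂μ) ^ (1 / a) *
        (∫⁻ x, ENNReal.ofReal (|u x| ^ ρ) ∂μ) ^ (α / ρ)) ^ r := by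
  set g : X → ℝ≥0∞ := fun x => ENNReal.ofReal (G x)
  set w : X → ℝ≥0∞ := fun x => ENNReal.ofReal (|u x| ^ α)
  have hra : r < a := by
    have : 1 / a < 1 / r := by rw [hexp]; linarith [div_pos hα hρ]
    exact (one_div_lt_one_div ha hr).mp this
  have holder := ENNReal.lintegral_Lp_mul_le_Lq_mul_Lr (r := ρ / α) hr hra
    (by rw [hexp, one_div_div]) μ (f := g) (g := w)
    hG.ennreal_ofReal.aemeasurable (hu.abs.pow_const α).ennreal_ofReal.aemeasurable
  have hg : ∀ x, g x ^ a = ENNReal.ofReal (G x ^ a) := fun x =>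
    ENNReal.ofReal_rpow_of_nonneg (hG0 x) ha.le
  have hw : ∀ x, w x ^ (ρ / α) = ENNReal.ofReal (|u x| ^ ρ) := fun x => by
    rw [ENNReal.ofReal_rpow_of_nonneg (by positivity) (by positivity), ← Real.rpow_mul (abs_nonneg _),
      mul_div_cancel₀ _ hα.ne']
  have hfgw : ∀ x, f x ≤ (g * w) x ^ r := fun x => by
    rw [Pi.mul_apply, ← ENNReal.ofReal_mul (hG0 x), ENNReal.ofReal_rpow_of_nonneg
      (mul_nonneg (hG0 x) (by positivity)) hr.le]
    exact hf x
  simp only [hg, hw, one_div_div] at holder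
  calc ∫⁻ x, f x ∂μ ≤ ∫⁻ x, (g * w) x ^ r ∂μ := lintegral_mono hfgw
    _ = ((∫⁻ x, (g * w) x ^ r ∂μ) ^ (1 / r)) ^ r := by
      rw [← ENNReal.rpow_mul, one_div_mul_cancel hr.ne', ENNReal.rpow_one]
    _ ≤ _ := by gcongr

lemma mixNorm_le_mul_mixNorm_rpow {d : ℕ} {q r a ρ α : ℝ} (hq : 0 < q) (hr : 0 < r) (ha : 0 < a)
    (hρ : 0 < ρ) (hα : 0 < α) (hexp : 1 / r = 1 / a + α / ρ) {I : Set ℝ}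
    {Ω : Set (ℝ × Euc d)} {F u : ℝ × Euc d → ℝ} {G : Euc d → ℝ} (hG : Measurable G)
    (hu : Measurable u) (hG0 : ∀ x, 0 ≤ G x) (hF : ∀ p ∈ Ω, |F p| ≤ G p.2 * |u p| ^ α) :
    mixNorm d q r I Ω F ≤
      (∫⁻ x, ENNReal.ofReal (G x ^ a)) ^ (1 / a) * mixNorm d (α * q) ρ I Set.univ u ^ α := by
  unfold mixNorm
  simp only [Set.indicator_univ]
  set J := (∫⁻ x, ENNReal.ofReal (G x ^ a)) ^ (1 / a)
  set Y : ℝ → ℝ≥0∞ := fun t => ∫⁻ x, ENNReal.ofReal (|u (t, x)| ^ ρ)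
  have hslice : ∀ t, ∫⁻ x, Ω.indicator (fun p => ENNReal.ofReal (|F p| ^ r)) (t, x) ≤
      (J * Y t ^ (α / ρ)) ^ r := fun t =>
    lintegral_le_mul_rpow_of_le_mul_rpow hr ha hρ hα hexp hG (hu.comp measurable_prodMk_left)
      hG0 fun x => by
        by_cases hx : (t, x) ∈ Ω
        · rw [Set.indicator_of_mem hx]
          exact ENNReal.ofReal_le_ofReal (Real.rpow_le_rpow (abs_nonneg _) (hF _ hx) hr.le)
        · simp [Set.indicator_of_notMem hx]
  have hY : Measurable Y :=
    (hu.abs.pow_const ρ).ennreal_ofReal.lintegral_prod_right'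
  clear_value J
  have hpow : ∀ t, ((J * Y t ^ (α / ρ)) ^ r) ^ (q / r) = J ^ q * Y t ^ (α * q / ρ) := fun t => by
    rw [← ENNReal.rpow_mul, mul_div_cancel₀ _ hr.ne', ENNReal.mul_rpow_of_nonneg _ _ hq.le,
      ← ENNReal.rpow_mul, div_mul_eq_mul_div]
  calc _ ≤ (∫⁻ t in I, ((J * Y t ^ (α / ρ)) ^ r) ^ (q / r)) ^ (1 / q) := by
        gcongr with t
        exact hslice t
    _ = (J ^ q * ∫⁻ t in I, Y t ^ (α * q / ρ)) ^ (1 / q) := by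
        simp only [hpow]
        rw [lintegral_const_mul _ (hY.pow_const _)]
    _ = J * ((∫⁻ t in I, Y t ^ (α * q / ρ)) ^ (1 / (α * q))) ^ α := by
        rw [ENNReal.mul_rpow_of_nonneg _ _ (by positivity), ← ENNReal.rpow_mul J,
          ← ENNReal.rpow_mul _ _ α, mul_one_div_cancel hq.ne', ENNReal.rpow_one]
        congr 2
        field_simp

def bubbleBase (d : ℕ) (x : Euc d) : ℝ := 1 + ‖x‖ ^ 2 / ((d : ℝ) * ((d : ℝ) - 2))

def bubbleWeight (d : ℕ) (K β : ℝ) (x : Euc d) : ℝ := K * ‖x‖ * bubbleBase d x ^ (-β)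

section bubble

variable {d : ℕ}

lemma Wgs_eq_bubbleBase_rpow (x : Euc d) :
    Wgs d x = bubbleBase d x ^ (-(((d : ℝ) - 2) / 2)) := rfl

lemma bubbleBase_pos (hd : 2 < d) (x : Euc d) : 0 < bubbleBase d x := by
  have : (2 : ℝ) < d := by exact_mod_cast hd
  unfold bubbleBase
  have : 0 < (d : ℝ) * ((d : ℝ) - 2) := by nlinarith
  positivity

lemma continuous_bubbleBase : Continuous (bubbleBase d) := by
  unfold bubbleBase; fun_prop

lemma Wgs_pos (hd : 2 < d) (x : Euc d) : 0 < Wgs d x :=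
  Real.rpow_pos_of_pos (bubbleBase_pos hd x) _

lemma continuous_bubbleWeight (hd : 2 < d) (K β : ℝ) : Continuous (bubbleWeight d K β) :=
  continuous_const.mul continuous_norm |>.mul
    (continuous_bubbleBase.rpow_const fun x => Or.inl (bubbleBase_pos hd x).ne')

lemma bubbleWeight_nonneg (hd : 2 < d) {K : ℝ} (hK : 0 ≤ K) (β : ℝ) (x : Euc d) :
    0 ≤ bubbleWeight d K β x := by
  have := Real.rpow_nonneg (bubbleBase_pos hd x).le (-β)
  unfold bubbleWeight
  positivity

lemma norm_fderiv_Wgs (hd : 2 < d) (x : Euc d) :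
    ‖fderiv ℝ (Wgs d) x‖ = ‖x‖ / d * bubbleBase d x ^ (-(d : ℝ) / 2) := by
  have hd' : (2 : ℝ) < d := by exact_mod_cast hd
  set c : ℝ := (d : ℝ) * ((d : ℝ) - 2)
  have hc : 0 < c := by positivity
  have hb : HasFDerivAt (bubbleBase d) (c⁻¹ • (2 : ℕ) • innerSL ℝ x) x := by
    have hfun : bubbleBase d = fun y => 1 + c⁻¹ * ‖y‖ ^ 2 := by
      funext y; rw [bubbleBase, div_eq_inv_mul]
    rw [hfun]
    exact ((hasStrictFDerivAt_norm_sq x).hasFDerivAt.const_mul c⁻¹).const_add 1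
  have hW : HasFDerivAt (Wgs d) _ x :=
    hb.rpow_const (p := -(((d : ℝ) - 2) / 2)) (Or.inl (bubbleBase_pos hd x).ne')
  rw [hW.fderiv, ← Nat.cast_smul_eq_nsmul ℝ, norm_smul, norm_smul, norm_smul, innerSL_apply_norm,
    show -(((d : ℝ) - 2) / 2) - 1 = -(d : ℝ) / 2 by ring, Real.norm_eq_abs, Real.norm_eq_abs,
    Real.norm_eq_abs, abs_mul, abs_neg, abs_of_pos (by linarith : 0 < ((d : ℝ) - 2) / 2),
    abs_of_pos (Real.rpow_pos_of_pos (bubbleBase_pos hd x) _), abs_of_pos (inv_pos.2 hc)]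
  field_simp
  ring

lemma Wgs_rpow_mul_norm_fderiv_mul_sq_le (hd : 2 < d) {α : ℝ} (hα : α ≤ 2) (x : Euc d) {s : ℝ}
    (hs0 : 0 ≤ s) (hs : s ≤ Wgs d x / 4) :
    Wgs d x ^ (pc d - 3) * ‖fderiv ℝ (Wgs d) x‖ * s ^ 2 ≤
      bubbleWeight d (4 ^ (α - 2) / d) (((d : ℝ) + 4 - ((d : ℝ) - 2) * α) / 2) x * s ^ α := by
  have hd' : (2 : ℝ) < d := by exact_mod_cast hd
  have hd2 : (d : ℝ) - 2 ≠ 0 := by linarith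
  have hb := bubbleBase_pos hd x
  have hsq : s ^ 2 = (s ^ (2 - α)) * s ^ α := by
    rw [← Real.rpow_add' hs0 (by norm_num), sub_add_cancel, Real.rpow_two]
  have hW (e : ℝ) : Wgs d x ^ e = bubbleBase d x ^ (-(((d : ℝ) - 2) / 2) * e) := by
    rw [Wgs_eq_bubbleBase_rpow, ← Real.rpow_mul hb.le]
  have hsmall : s ^ (2 - α) ≤ 4 ^ (α - 2) * Wgs d x ^ (2 - α) := by
    calc s ^ (2 - α) ≤ (Wgs d x / 4) ^ (2 - α) := by gcongr
      _ = 4 ^ (α - 2) * Wgs d x ^ (2 - α) := by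
        rw [Real.div_rpow (Wgs_pos hd x).le (by norm_num), div_eq_mul_inv, mul_comm,
          ← Real.rpow_neg (by norm_num), neg_sub]
  calc Wgs d x ^ (pc d - 3) * ‖fderiv ℝ (Wgs d) x‖ * s ^ 2
      ≤ Wgs d x ^ (pc d - 3) * ‖fderiv ℝ (Wgs d) x‖ * ((4 ^ (α - 2) * Wgs d x ^ (2 - α)) * s ^ α) := by
        have := Real.rpow_nonneg (Wgs_pos hd x).le (pc d - 3)
        rw [hsq]; gcongr
    _ = 4 ^ (α - 2) / d * ‖x‖ * (bubbleBase d x ^ (-(((d : ℝ) - 2) / 2) * (pc d - 3)) *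
          bubbleBase d x ^ (-(d : ℝ) / 2) * bubbleBase d x ^ (-(((d : ℝ) - 2) / 2) * (2 - α))) *
          s ^ α := by
        rw [norm_fderiv_Wgs hd, hW, hW]; ring
    _ = _ := by
        rw [bubbleWeight, ← Real.rpow_add hb, ← Real.rpow_add hb, pc]
        congr 3
        field_simp
        ring

lemma norm_mul_bubbleBase_rpow_neg_le (hd : 3 ≤ d) {β : ℝ} (hβ : 0 ≤ β) (x : Euc d) :
    ‖x‖ * bubbleBase d x ^ (-β) ≤
      (2 * ((d : ℝ) * ((d : ℝ) - 2))) ^ β * (1 + ‖x‖) ^ (1 - 2 * β) := by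
  have hd' : (3 : ℝ) ≤ d := by exact_mod_cast hd
  set c : ℝ := (d : ℝ) * ((d : ℝ) - 2)
  have hc : 1 ≤ c := by nlinarith
  have hc0 : 0 < c := by linarith
  have hx : 0 < 1 + ‖x‖ := by positivity
  have hb : (1 + ‖x‖) ^ 2 / (2 * c) ≤ bubbleBase d x := by
    rw [show bubbleBase d x = (c + ‖x‖ ^ 2) / c by rw [add_div, div_self hc0.ne']; rfl,
      div_le_div_iff₀ (by positivity) hc0]
    nlinarith [sq_nonneg (1 - ‖x‖), norm_nonneg x]
  have hb0 : 0 < (1 + ‖x‖) ^ 2 / (2 * c) := by positivity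
  calc ‖x‖ * bubbleBase d x ^ (-β) ≤ (1 + ‖x‖) * ((1 + ‖x‖) ^ 2 / (2 * c)) ^ (-β) :=
        mul_le_mul (by linarith) (Real.rpow_le_rpow_of_nonpos hb0 hb (by linarith))
          (Real.rpow_nonneg (hb0.trans_le hb).le _) hx.le
    _ = (2 * c) ^ β * (1 + ‖x‖) ^ (1 - 2 * β) := by
        rw [Real.rpow_neg (by positivity), Real.div_rpow (by positivity) (by positivity), inv_div,
          ← Real.rpow_natCast, ← Real.rpow_mul hx.le, Real.rpow_sub hx, Real.rpow_one]
        push_cast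
        ring

lemma lintegral_ofReal_bubbleWeight_rpow_lt_top (hd : 3 ≤ d) {K a β : ℝ} (hK : 0 ≤ K)
    (ha : 0 < a) (hdim : (d : ℝ) < a * (2 * β - 1)) :
    ∫⁻ x, ENNReal.ofReal (bubbleWeight d K β x ^ a) < ∞ := by
  have hd' : (3 : ℝ) ≤ d := by exact_mod_cast hd
  have hβ : 0 ≤ β := by nlinarith
  set c : ℝ := (d : ℝ) * ((d : ℝ) - 2)
  have hc : 0 < c := by nlinarith
  have hM : 0 ≤ K * (2 * c) ^ β := by positivity
  have hpt (x : Euc d) : bubbleWeight d K β x ^ a ≤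
      (K * (2 * c) ^ β) ^ a * (1 + ‖x‖) ^ (-(a * (2 * β - 1))) := by
    have hx : 0 < 1 + ‖x‖ := by positivity
    have := Real.rpow_nonneg (bubbleBase_pos (by omega) x).le (-β)
    calc bubbleWeight d K β x ^ a
        ≤ (K * ((2 * c) ^ β * (1 + ‖x‖) ^ (1 - 2 * β))) ^ a := by
          rw [bubbleWeight, mul_assoc]
          exact Real.rpow_le_rpow (by positivity)
            (mul_le_mul_of_nonneg_left (norm_mul_bubbleBase_rpow_neg_le hd hβ x) hK) ha.le
      _ = (K * (2 * c) ^ β) ^ a * (1 + ‖x‖) ^ (-(a * (2 * β - 1))) := by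
          rw [← mul_assoc, Real.mul_rpow hM (by positivity), ← Real.rpow_mul hx.le]
          congr 2
          ring
  calc ∫⁻ x, ENNReal.ofReal (bubbleWeight d K β x ^ a)
      ≤ ∫⁻ x : Euc d, ENNReal.ofReal ((K * (2 * c) ^ β) ^ a) *
          ENNReal.ofReal ((1 + ‖x‖) ^ (-(a * (2 * β - 1)))) :=
        lintegral_mono fun x => by
          rw [← ENNReal.ofReal_mul (by positivity)]
          exact ENNReal.ofReal_le_ofReal (hpt x)
    _ < ∞ := by
        rw [lintegral_const_mul' _ _ ENNReal.ofReal_ne_top]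
        refine ENNReal.mul_lt_top ENNReal.ofReal_lt_top (finite_integral_one_add_norm ?_)
        rwa [finrank_euclideanSpace_fin]

end bubble

theorem Wpc3_gradW_v2_small_regime_general (d : ℕ) (hd : 6 ≤ d) (I : Set ℝ) :
    ∃ C : ℝ, 0 < C ∧ ∀ v : ℝ × Euc d → ℂ, Measurable v →
      mixNorm d 2 (2 * (d : ℝ) / ((d : ℝ) + 2)) I
          {p : ℝ × Euc d | p.1 ∈ I ∧ ‖v p‖ ≤ Wgs d p.2 / 4}
          (fun p => (Wgs d p.2) ^ (pc d - 3) * ‖fderiv ℝ (Wgs d) p.2‖ * ‖v p‖ ^ 2) ≤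
        ENNReal.ofReal C *
          (mixNorm d (q0 d) (r0 d) I Set.univ (fun p => ‖v p‖)) ^
            ((2 * (d : ℝ) + 3) / (2 * ((d : ℝ) - 2))) := by
  have hd' : (6 : ℝ) ≤ d := by exact_mod_cast hd
  have hd2 : (d : ℝ) - 2 ≠ 0 := by linarith
  set α : ℝ := (2 * (d : ℝ) + 3) / (2 * ((d : ℝ) - 2))
  have hα : 0 < α := div_pos (by linarith) (by linarith)
  have hα2 : α ≤ 2 := by rw [div_le_iff₀ (by linarith)]; linarith
  have hβ : ((d : ℝ) + 4 - ((d : ℝ) - 2) * α) / 2 = 5 / 4 := by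
    simp only [α]; field_simp; ring
  have hexp : 1 / (2 * (d : ℝ) / ((d : ℝ) + 2)) = 1 / (4 * d / 5) + α / r0 d := by
    simp only [α, r0]; field_simp; ring
  have hr0 : 0 < r0 d := div_pos (by positivity) (mul_pos (by linarith) (by linarith))
  set G := bubbleWeight d (4 ^ (α - 2) / d) (5 / 4)
  set J := (∫⁻ x, ENNReal.ofReal (G x ^ (4 * d / 5 : ℝ))) ^ (1 / (4 * d / 5 : ℝ))
  have hJ : J ≠ ∞ := ENNReal.rpow_ne_top_of_nonneg (by positivity)
    (lintegral_ofReal_bubbleWeight_rpow_lt_top (by omega) (by positivity) (by positivity)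
      (by linarith)).ne
  refine ⟨J.toReal + 1, by positivity, fun v hv => ?_⟩
  calc _ ≤ J * mixNorm d (α * 2) (r0 d) I Set.univ (fun p => ‖v p‖) ^ α :=
        mixNorm_le_mul_mixNorm_rpow two_pos (by positivity) (by positivity) hr0 hα hexp
          (continuous_bubbleWeight (by omega) _ _).measurable hv.norm
          (bubbleWeight_nonneg (by omega) (by positivity) _) fun p hp => by
            have := Real.rpow_nonneg (Wgs_pos (by omega) p.2).le (pc d - 3)
            rw [abs_norm, abs_of_nonneg (by positivity)]
            have h := Wgs_rpow_mul_norm_fderiv_mul_sq_le (by omega) hα2 p.2 (norm_nonneg _) hp.2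
            rwa [hβ] at h
    _ ≤ _ := by
        rw [show α * 2 = q0 d by simp only [α, q0]; field_simp]
        gcongr
        exact (ENNReal.le_ofReal_iff_toReal_le hJ (by positivity)).2 (by linarith)

/-- on Ω' = {|v| ≤ W/4},
‖W^{p_c−3}|∇W||v|²‖_{L²_t L^{2d/(d+2)}_x(Ω')} ≤ C ‖v‖_{L^{q₀}_t L^{r₀}_x}^{(2d+3)/(2(d−2))}. -/
theorem Wpc3_gradW_v2_small_regime (d : ℕ) (hd : 6 ≤ d) (I : Set ℝ) (hI : I.OrdConnected) :
    ∃ C : ℝ, 0 < C ∧ ∀ v : ℝ × Euc d → ℂ, Measurable v →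
      mixNorm d 2 (2 * (d : ℝ) / ((d : ℝ) + 2)) I
          {p : ℝ × Euc d | p.1 ∈ I ∧ ‖v p‖ ≤ Wgs d p.2 / 4}
          (fun p => (Wgs d p.2) ^ (pc d - 3) * ‖fderiv ℝ (Wgs d) p.2‖ * ‖v p‖ ^ 2) ≤
        ENNReal.ofReal C *
          (mixNorm d (q0 d) (r0 d) I Set.univ (fun p => ‖v p‖)) ^
            ((2 * (d : ℝ) + 3) / (2 * ((d : ℝ) - 2))) :=
  Wpc3_gradW_v2_small_regime_general d hd I
end
end
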